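/- Let V be a nonempty finite type with n = Fintype.card V and E : Fin m → Sym2 V a decodable multigraph on V. Suppose (k^G_{m(G)} : ℤ) = m(G)·(n + 1) + n − 2m + 1. Let α be the number of vertices v with d_I(v) = m(G) and β the number of vertices v with d_I(v) ≥ m(G) + 2. Then β = 0, and either ((α : ℤ) = m(G)·(n + 1) + n − 2m and L_G = m(G)), or ((α : ℤ) = m(G)·(n + 1) + n − 2m + 1 and L_G = m(G) + 1). -/

import Mathlib

/-- `e` is a loop index at vertex `v`. -/
def IsLoopIdx {V : Type*} {m : ℕ} (E : Fin m → Sym2 V) (v : V) (e : Fin m) : Prop :=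
  E e = Sym2.diag v

/-- `u` and `v` are connected in the multigraph `E` with the edge indices in `S` deleted. -/
def ConnectedMod {V : Type*} {m : ℕ} (E : Fin m → Sym2 V) (S : Finset (Fin m))
    (u v : V) : Prop :=
  Relation.EqvGen (fun a b => ∃ e : Fin m, e ∉ S ∧ E e = s(a, b)) u v

/-- `G − S` is decodable: every vertex is connected in `G − S` to a vertex with a loop
outside `S`. -/
def DecodableMod {V : Type*} {m : ℕ} (E : Fin m → Sym2 V) (S : Finset (Fin m)) : Prop :=
  ∀ u : V, ∃ v : V, (∃ e : Fin m, e ∉ S ∧ IsLoopIdx E v e) ∧ ConnectedMod E S u v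

def IsDecodable {V : Type*} {m : ℕ} (E : Fin m → Sym2 V) : Prop :=
  DecodableMod E ∅

/-- `c_x^G`: the number of `x`-element sets of edge indices whose deletion leaves a
decodable graph. -/
noncomputable def cG {V : Type*} {m : ℕ} (E : Fin m → Sym2 V) (x : ℕ) : ℕ :=
  Set.ncard {S : Finset (Fin m) | S.card = x ∧ DecodableMod E S}

/-- `k_x^G = C(m,x) − c_x^G`. -/
noncomputable def kG {V : Type*} {m : ℕ} (E : Fin m → Sym2 V) (x : ℕ) : ℕ :=
  Nat.choose m x - cG E x

/-- `m(G)`: the minimum cardinality of a loop cut. -/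
noncomputable def mCut {V : Type*} {m : ℕ} (E : Fin m → Sym2 V) : ℕ :=
  sInf {k : ℕ | ∃ S : Finset (Fin m), S.card = k ∧ ¬ DecodableMod E S}

/-- incidence degree of `v` (a loop at `v` counts once). -/
noncomputable def dI {V : Type*} {m : ℕ} (E : Fin m → Sym2 V) (v : V) : ℕ :=
  Set.ncard {e : Fin m | v ∈ E e}

/-- `δ_I(G)`: the minimum incidence degree. -/
noncomputable def deltaI {V : Type*} {m : ℕ} (E : Fin m → Sym2 V) : ℕ :=
  sInf (Set.range (dI E))

/-- `L_G`: the number of loop indices. -/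
noncomputable def LG {V : Type*} {m : ℕ} (E : Fin m → Sym2 V) : ℕ :=
  Set.ncard {e : Fin m | ∃ v : V, E e = Sym2.diag v}

/-- `δ_ℓ(v)`: the number of loop indices at `v`. -/
noncomputable def loopsAt {V : Type*} {m : ℕ} (E : Fin m → Sym2 V) (v : V) : ℕ :=
  Set.ncard {e : Fin m | E e = Sym2.diag v}

/-- `Δ_ℓ(G)`: the maximum number of loops at a single vertex. -/
noncomputable def DeltaLoops {V : Type*} {m : ℕ} (E : Fin m → Sym2 V) : ℕ :=
  sSup (Set.range (loopsAt E))

/-- `κ_G`: the edge connectivity. -/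
noncomputable def kappaG {V : Type*} {m : ℕ} (E : Fin m → Sym2 V) : ℕ :=
  sInf {k : ℕ | ∃ S : Finset (Fin m), S.card = k ∧ ∃ u v : V, ¬ ConnectedMod E S u v}


open Finset

/-!
Every vertex star `{e | v ∈ E e}` is a loop cut, and so is the set of all loops, hence
`m(G) ≤ d_I(v)` and `m(G) ≤ L_G`. Decodability makes the stars of distinct vertices distinct
and, as soon as there are two vertices, different from the set of loops; so `k_{m(G)}` is at
least `α`, and at least `α + 1` when `L_G = m(G)`. On the other side the handshake identity
`∑ d_I(v) + L_G = 2m` with `d_I(v) ≥ m(G)` gives `α ≥ m(G)·n + n − 2m + L_G + β`. Comparing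
the two bounds with the assumed value of `k_{m(G)}` forces `β = 0` and pins down `α` and `L_G`.
-/

lemma Sym2.eq_diag_of_isDiag_of_mem {V : Type*} {z : Sym2 V} {v : V} (hz : z.IsDiag)
    (hv : v ∈ z) : z = Sym2.diag v := by
  induction z with
  | h a b =>
    obtain rfl := Sym2.mk_isDiag_iff.mp hz
    obtain rfl : v = a := by simpa using hv
    rfl

namespace ConnectedMod

variable {V : Type*} {m : ℕ} {E : Fin m → Sym2 V} {S : Finset (Fin m)}

lemma iff_of_closed (P : V → Prop)
    (hP : ∀ e ∉ S, ∀ a b, E e = s(a, b) → P a → P b) {u v : V}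
    (huv : ConnectedMod E S u v) : P u ↔ P v := by
  induction huv with
  | rel a b hab =>
    obtain ⟨e, he, hEe⟩ := hab
    exact ⟨hP e he a b hEe, hP e he b a (hEe.trans Sym2.eq_swap)⟩
  | refl => rfl
  | symm _ _ _ ih => exact ih.symm
  | trans _ _ _ _ _ ih₁ ih₂ => exact ih₁.trans ih₂

end ConnectedMod

section IncidenceCounts

variable {V : Type*} [DecidableEq V] {m : ℕ} (E : Fin m → Sym2 V)

def incidentEdges (v : V) : Finset (Fin m) := {e | v ∈ E e}

def loopEdges : Finset (Fin m) := {e | (E e).IsDiag}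

@[simp] lemma mem_incidentEdges {v : V} {e : Fin m} : e ∈ incidentEdges E v ↔ v ∈ E e := by
  simp [incidentEdges]

@[simp] lemma mem_loopEdges {e : Fin m} : e ∈ loopEdges E ↔ (E e).IsDiag := by
  simp [loopEdges]

lemma card_incidentEdges (v : V) : #(incidentEdges E v) = dI E v := by
  rw [dI, ← Set.ncard_coe_finset]; congr 1; ext e; simp

lemma card_loopEdges : #(loopEdges E) = LG E := by
  rw [LG, ← Set.ncard_coe_finset]; congr 1; ext e
  simp [← Sym2.mem_diagSet, ← Sym2.range_diag, eq_comm]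

end IncidenceCounts

lemma sum_dI_add_LG {V : Type*} [Fintype V] {m : ℕ} (E : Fin m → Sym2 V) :
    ∑ v, dI E v + LG E = 2 * m := by
  classical
  have hdeg : ∑ v, dI E v = ∑ e, #(E e).toFinset := by
    simp_rw [← card_incidentEdges]
    convert sum_card_bipartiteAbove_eq_sum_card_bipartiteBelow (s := univ) (t := univ)
      (r := fun (v : V) (e : Fin m) => v ∈ E e) using 3 with v _ e _ <;>
      ext <;> simp [incidentEdges, bipartiteAbove, bipartiteBelow]
  rw [hdeg, ← card_loopEdges, loopEdges, card_filter, ← sum_add_distrib]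
  simp [Sym2.card_toFinset, apply_ite₂, mul_comm]

section Decodability

variable {V : Type*} {m : ℕ} (E : Fin m → Sym2 V)

lemma not_decodableMod_incidentEdges [DecidableEq V] (v : V) :
    ¬ DecodableMod E (incidentEdges E v) := by
  intro h
  obtain ⟨w, ⟨e, he, hloop⟩, hvw⟩ := h v
  have hclosed : ∀ e ∉ incidentEdges E v, ∀ a b, E e = s(a, b) → a = v → b = v := by
    rintro e he a b hab rfl
    simp [hab] at he
  obtain rfl := (ConnectedMod.iff_of_closed _ hclosed hvw).mp rfl
  exact he ((mem_incidentEdges E).mpr (hloop ▸ Sym2.mem_mk_left w w))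

lemma not_decodableMod_loopEdges [DecidableEq V] [Nonempty V] :
    ¬ DecodableMod E (loopEdges E) := by
  intro h
  obtain ⟨w, ⟨e, he, hloop⟩, -⟩ := h (Classical.arbitrary V)
  exact he ((mem_loopEdges E).mpr (hloop ▸ Sym2.diag_isDiag w))

lemma mCut_le_card {S : Finset (Fin m)} (h : ¬ DecodableMod E S) : mCut E ≤ #S :=
  Nat.sInf_le ⟨S, rfl, h⟩

lemma mCut_le_dI (v : V) : mCut E ≤ dI E v := by
  classical
  exact card_incidentEdges E v ▸ mCut_le_card E (not_decodableMod_incidentEdges E v)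

lemma mCut_le_LG [Nonempty V] : mCut E ≤ LG E := by
  classical
  exact card_loopEdges E ▸ mCut_le_card E (not_decodableMod_loopEdges E)

lemma incidentEdges_injective [DecidableEq V] (hdec : IsDecodable E) :
    Function.Injective (incidentEdges E) := by
  intro u v huv
  by_contra hne
  have hiff : ∀ e, u ∈ E e ↔ v ∈ E e := fun e => by
    rw [← mem_incidentEdges E, huv, mem_incidentEdges]
  have hclosed : ∀ e ∉ (∅ : Finset (Fin m)), ∀ a b, E e = s(a, b) →
      (a = u ∨ a = v) → (b = u ∨ b = v) := by
    intro e _ a b hab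
    have := hiff e
    rw [hab] at this
    grind
  obtain ⟨w, ⟨e, -, hloop⟩, huw⟩ := hdec u
  have hw := (ConnectedMod.iff_of_closed _ hclosed huw).mp (Or.inl rfl)
  have hu : u ∈ E e := by
    rcases hw with rfl | rfl
    · exact hloop ▸ Sym2.mem_mk_left _ _
    · exact (hiff e).mpr (hloop ▸ Sym2.mem_mk_left _ _)
  have hv := (hiff e).mp hu
  rw [hloop, Sym2.diag, Sym2.mem_iff, or_self] at hu hv
  exact hne (hu.trans hv.symm)

lemma loopEdges_ne_incidentEdges [DecidableEq V] [Nontrivial V] (hdec : IsDecodable E) (v : V) :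
    loopEdges E ≠ incidentEdges E v := by
  intro hTv
  have hloop_of_mem : ∀ e, v ∈ E e → E e = Sym2.diag v := fun e hv =>
    Sym2.eq_diag_of_isDiag_of_mem ((mem_loopEdges E).mp (hTv ▸ (mem_incidentEdges E).mpr hv)) hv
  have hclosed : ∀ e ∉ (∅ : Finset (Fin m)), ∀ a b, E e = s(a, b) → a = v → b = v := by
    rintro e - a b hab rfl
    have := hloop_of_mem e (hab ▸ Sym2.mem_mk_left _ _)
    rw [hab, Sym2.diag, Sym2.eq_iff] at this
    grind
  obtain ⟨u, hu⟩ := exists_ne v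
  obtain ⟨w, ⟨e, -, hloop⟩, huw⟩ := hdec u
  have hw : v ∈ E e := (mem_incidentEdges E).mp
    (hTv ▸ (mem_loopEdges E).mpr (hloop ▸ Sym2.diag_isDiag w))
  rw [hloop, Sym2.diag, Sym2.mem_iff, or_self] at hw
  exact hu ((ConnectedMod.iff_of_closed _ hclosed huw).mpr hw.symm)

lemma kG_eq_ncard (x : ℕ) :
    kG E x = {S : Finset (Fin m) | #S = x ∧ ¬ DecodableMod E S}.ncard := by
  have hsplit := Set.ncard_inter_add_ncard_sdiff_eq_ncard
    {S : Finset (Fin m) | #S = x} {S | DecodableMod E S}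
  have hchoose : {S : Finset (Fin m) | #S = x}.ncard = m.choose x := by
    have : {S : Finset (Fin m) | #S = x} = ↑(powersetCard x (univ : Finset (Fin m))) := by
      ext; simp
    rw [this, Set.ncard_coe_finset, card_powersetCard, card_univ, Fintype.card_fin]
  rw [kG, cG, ← hchoose, ← hsplit]
  exact Nat.add_sub_cancel_left _ _

lemma ncard_dI_eq_le_kG (hdec : IsDecodable E) (x : ℕ) :
    {v | dI E v = x}.ncard ≤ kG E x := by
  classical
  rw [kG_eq_ncard]
  refine Set.ncard_le_ncard_of_injOn (incidentEdges E) ?_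
    (incidentEdges_injective E hdec).injOn (Set.toFinite _)
  intro v hv
  exact ⟨(card_incidentEdges E v).trans hv, not_decodableMod_incidentEdges E v⟩

lemma ncard_dI_eq_lt_kG [Nontrivial V] (hdec : IsDecodable E) {x : ℕ} (hL : LG E = x) :
    {v | dI E v = x}.ncard < kG E x := by
  classical
  rw [kG_eq_ncard, ← Set.ncard_image_of_injective _ (incidentEdges_injective E hdec)]
  have hnotMem : loopEdges E ∉ incidentEdges E '' {v | dI E v = x} := by
    rintro ⟨v, -, hv⟩
    exact loopEdges_ne_incidentEdges E hdec v hv.symm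
  rw [Nat.lt_iff_add_one_le, ← Set.ncard_insert_of_notMem hnotMem]
  refine Set.ncard_le_ncard ?_ (Set.toFinite _)
  rintro S (rfl | ⟨v, hv, rfl⟩)
  · exact ⟨(card_loopEdges E).trans hL, not_decodableMod_loopEdges E⟩
  · exact ⟨(card_incidentEdges E v).trans hv, not_decodableMod_incidentEdges E v⟩

lemma LG_eq_of_subsingleton [Subsingleton V] : LG E = m := by
  classical
  rw [← card_loopEdges, loopEdges, filter_true_of_mem, card_univ, Fintype.card_fin]
  intro e _
  induction E e with
  | h a b => exact Sym2.mk_isDiag_iff.mpr (Subsingleton.elim a b)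

end Decodability

lemma mul_card_add_ncard_le_sum_add_ncard {ι : Type*} [Fintype ι] (f : ι → ℕ) {μ : ℕ}
    (hμ : ∀ i, μ ≤ f i) :
    μ * Fintype.card ι + Fintype.card ι + {i | μ + 2 ≤ f i}.ncard ≤
      ∑ i, f i + {i | f i = μ}.ncard := by
  classical
  have hpoint : ∀ i ∈ (univ : Finset ι),
      μ + 1 + (if μ + 2 ≤ f i then 1 else 0) ≤ f i + (if f i = μ then 1 else 0) := by
    intro i _
    have := hμ i
    split_ifs <;> omega
  have hsum := sum_le_sum hpoint
  simp only [sum_add_distrib, sum_const, card_univ, smul_eq_mul, ← card_filter] at hsum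
  simp only [Set.ncard_eq_toFinset_card', Set.toFinset_ofPred]
  linarith

theorem stmt11 {V : Type*} [Fintype V] [Nonempty V] {m : ℕ} (E : Fin m → Sym2 V)
    (hdec : IsDecodable E)
    (hk : (kG E (mCut E) : ℤ) =
      (mCut E : ℤ) * (Fintype.card V + 1) + Fintype.card V - 2 * m + 1) :
    Set.ncard {v : V | mCut E + 2 ≤ dI E v} = 0 ∧
      (((Set.ncard {v : V | dI E v = mCut E} : ℤ) =
          (mCut E : ℤ) * (Fintype.card V + 1) + Fintype.card V - 2 * m ∧
        LG E = mCut E) ∨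
       ((Set.ncard {v : V | dI E v = mCut E} : ℤ) =
          (mCut E : ℤ) * (Fintype.card V + 1) + Fintype.card V - 2 * m + 1 ∧
        LG E = mCut E + 1)) := by
  have hdeg := sum_dI_add_LG E
  have hlow := mul_card_add_ncard_le_sum_add_ncard (dI E) (mCut_le_dI E)
  have hα_le := ncard_dI_eq_le_kG E hdec (mCut E)
  have hμL := mCut_le_LG E
  have hα_lt_of_eq : LG E = mCut E → Set.ncard {v : V | dI E v = mCut E} < kG E (mCut E) := by
    intro hL
    rcases subsingleton_or_nontrivial V with hV | hV
    · -- one vertex carries all `m` edges as loops, so `m(G) = m` and `k ≤ C(m, m) = 1`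
      have hkm : kG E (mCut E) ≤ 1 :=
        (Nat.sub_le _ _).trans (by rw [← hL, LG_eq_of_subsingleton, Nat.choose_self])
      have hn : Fintype.card V = 1 :=
        le_antisymm (Fintype.card_le_one_iff_subsingleton.mpr hV) Fintype.card_pos
      have hμm : (mCut E : ℤ) = m := by exact_mod_cast hL.symm.trans (LG_eq_of_subsingleton E)
      rw [hn] at hk
      push_cast at hk
      have : (kG E (mCut E) : ℤ) ≤ 1 := by exact_mod_cast hkm
      linarith
    · exact ncard_dI_eq_lt_kG E hdec hL
  generalize Set.ncard {v | mCut E + 2 ≤ dI E v} = β at *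
  generalize Set.ncard {v | dI E v = mCut E} = α at *
  generalize kG E (mCut E) = k at *
  generalize ∑ v, dI E v = σ at *
  generalize LG E = L at *
  generalize mCut E = μ at *
  generalize Fintype.card V = n at *
  rcases hμL.eq_or_lt with rfl | hL
  · have hα_lt := hα_lt_of_eq rfl
    refine ⟨?_, Or.inl ⟨?_, rfl⟩⟩ <;> zify at * <;> linarith
  · refine ⟨?_, Or.inr ⟨?_, ?_⟩⟩ <;> zify at * <;> linarith
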